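/- If G is a split graph and H is any graph, then the composition (G, A, B) ∘ H is a split graph if and only if H is a split graph. -/

import Mathlib

open SimpleGraph Finset

/-- `s` is an independent set in `G`. -/
def IsIndepSet {α : Type*} (G : SimpleGraph α) (s : Set α) : Prop :=
  s.Pairwise fun a b => ¬ G.Adj a b

/-- `(G, A, B)` is a splitted graph: `A` an independent set and `B` a clique
partitioning the vertex set of `G`. -/
def IsSplitted {α : Type*} (G : SimpleGraph α) (A B : Set α) : Prop :=
  _root_.IsIndepSet G A ∧ G.IsClique B ∧ A ∪ B = Set.univ ∧ Disjoint A B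

/-- `G` is a split graph. -/
def IsSplitGraph {α : Type*} (G : SimpleGraph α) : Prop :=
  ∃ A B : Set α, IsSplitted G A B

/-- Tyshkevich composition `(G, A, B) ∘ H`: the disjoint union of `G` and `H`
together with all edges between the clique `B` and the vertices of `H`. -/
def comp {α β : Type*} (G : SimpleGraph α) (B : Set α) (H : SimpleGraph β) :
    SimpleGraph (α ⊕ β) where
  Adj x y :=
    match x, y with
    | Sum.inl a, Sum.inl a' => G.Adj a a'
    | Sum.inr b, Sum.inr b' => H.Adj b b'
    | Sum.inl a, Sum.inr _ => a ∈ B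
    | Sum.inr _, Sum.inl a => a ∈ B
  symm := by
    constructor
    rintro (a | b) (a' | b') h
    · exact G.adj_symm h
    · exact h
    · exact h
    · exact H.adj_symm h
  loopless := by
    constructor
    rintro (a | b) h
    · exact G.irrefl h
    · exact H.irrefl h

/-- The degree of a vertex, as the cardinality of its neighborhood. -/
noncomputable def deg {α : Type*} (G : SimpleGraph α) (v : α) : ℕ :=
  (G.neighborSet v).ncard

/-- The disjoint union of two edges. -/
def twoK2 : SimpleGraph (Fin 4) :=
  SimpleGraph.fromRel fun a b => (a.val = 0 ∧ b.val = 1) ∨ (a.val = 2 ∧ b.val = 3)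

/-- The 4-cycle. -/
def cycle4 : SimpleGraph (Fin 4) :=
  SimpleGraph.fromRel fun a b =>
    (a.val = 0 ∧ b.val = 1) ∨ (a.val = 1 ∧ b.val = 2) ∨
    (a.val = 2 ∧ b.val = 3) ∨ (a.val = 3 ∧ b.val = 0)

/-- The path on four vertices. -/
def path4 : SimpleGraph (Fin 4) :=
  SimpleGraph.fromRel fun a b =>
    (a.val = 0 ∧ b.val = 1) ∨ (a.val = 1 ∧ b.val = 2) ∨ (a.val = 2 ∧ b.val = 3)

/-- The 5-cycle. -/
def cycle5 : SimpleGraph (Fin 5) :=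
  SimpleGraph.fromRel fun a b =>
    (a.val = 0 ∧ b.val = 1) ∨ (a.val = 1 ∧ b.val = 2) ∨
    (a.val = 2 ∧ b.val = 3) ∨ (a.val = 3 ∧ b.val = 4) ∨ (a.val = 4 ∧ b.val = 0)

/-! `H` is an induced subgraph of `(G, A, B) ∘ H`, and splittings pull back along induced
embeddings. Conversely, splittings `(A, B)` of `G` and `(A', B')` of `H` glue to the splitting
`(A ⊕ A', B ⊕ B')` of the composition: `B ⊕ B'` is a clique because `B` is joined to all of `H`,
and `A ⊕ A'` is independent because `A` misses `B`. -/

theorem IsSplitted.comap {α β : Type*} {G : SimpleGraph α} {H : SimpleGraph β} {A B : Set α}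
    (f : H ↪g G) (h : IsSplitted G A B) : IsSplitted H (f ⁻¹' A) (f ⁻¹' B) := by
  obtain ⟨hA, hB, hU, hD⟩ := h
  refine ⟨fun x hx y hy hxy hadj => hA hx hy (f.injective.ne hxy) (f.map_adj_iff.2 hadj),
    fun x hx y hy hxy => f.map_adj_iff.1 (hB hx hy (f.injective.ne hxy)), ?_, hD.preimage f⟩
  rw [← Set.preimage_union, hU, Set.preimage_univ]

theorem IsSplitGraph.comap {α β : Type*} {G : SimpleGraph α} {H : SimpleGraph β}
    (f : H ↪g G) : IsSplitGraph G → IsSplitGraph H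
  | ⟨A, B, h⟩ => ⟨f ⁻¹' A, f ⁻¹' B, h.comap f⟩

section comp

variable {α β : Type*} {G : SimpleGraph α} {B : Set α} {H : SimpleGraph β}

def comp.inrEmbedding (G : SimpleGraph α) (B : Set α) (H : SimpleGraph β) : H ↪g comp G B H where
  toEmbedding := Function.Embedding.inr
  map_rel_iff' := Iff.rfl

theorem IsIndepSet.comp {A : Set α} {A' : Set β} (hA : _root_.IsIndepSet G A)
    (hAB : Disjoint A B) (hA' : _root_.IsIndepSet H A') :
    _root_.IsIndepSet (comp G B H) (Set.sumEquiv.symm (A, A')) := by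
  rintro _ (⟨a, ha, rfl⟩ | ⟨a, ha, rfl⟩) _ (⟨b, hb, rfl⟩ | ⟨b, hb, rfl⟩) hne hadj
  · exact hA ha hb (Sum.inl_injective.ne_iff.1 hne) hadj
  · exact hAB.ne_of_mem ha hadj rfl
  · exact hAB.ne_of_mem hb hadj rfl
  · exact hA' ha hb (Sum.inr_injective.ne_iff.1 hne) hadj

theorem SimpleGraph.IsClique.comp {B' : Set β} (hB : G.IsClique B) (hB' : H.IsClique B') :
    (comp G B H).IsClique (Set.sumEquiv.symm (B, B')) := by
  rintro _ (⟨a, ha, rfl⟩ | ⟨a, ha, rfl⟩) _ (⟨b, hb, rfl⟩ | ⟨b, hb, rfl⟩) hne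
  · exact hB ha hb (Sum.inl_injective.ne_iff.1 hne)
  · exact ha
  · exact hb
  · exact hB' ha hb (Sum.inr_injective.ne_iff.1 hne)

theorem IsSplitted.comp {A : Set α} {A' B' : Set β} (hG : IsSplitted G A B)
    (hH : IsSplitted H A' B') :
    IsSplitted (comp G B H) (Set.sumEquiv.symm (A, A')) (Set.sumEquiv.symm (B, B')) := by
  obtain ⟨hA, hB, hU, hD⟩ := hG
  obtain ⟨hA', hB', hU', hD'⟩ := hH
  refine ⟨hA.comp hD hA', hB.comp hB', ?_, ?_⟩
  · change Set.sumEquiv.symm (A, A') ⊔ Set.sumEquiv.symm (B, B') = ⊤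
    rw [← map_sup, Prod.mk_sup_mk]
    exact (congrArg _ (Prod.ext hU hU')).trans Set.sumEquiv.symm.map_top
  · exact (disjoint_map_orderIso_iff _).2 (Prod.disjoint_iff.2 ⟨hD, hD'⟩)

end comp

/-- the composition `(G, A, B) ∘ H` is a split graph iff `H` is. -/
theorem stmt6 {α β : Type*} (G : SimpleGraph α) (A B : Set α) (H : SimpleGraph β)
    (hsplit : IsSplitted G A B) :
    IsSplitGraph (comp G B H) ↔ IsSplitGraph H :=
  ⟨IsSplitGraph.comap (comp.inrEmbedding G B H),
    fun ⟨_, _, hH⟩ => ⟨_, _, hsplit.comp hH⟩⟩
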